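/- arXiv:1510.08165 — 5 statements merged into one kernel-verified Lean document; each statement's English description precedes it below -/
import Mathlib

section
/- Let H be a real Hilbert space and C a nonempty closed convex subset of H. Let T_1,…,T_N : C → C be asymptotically quasi-nonexpansive mappings with a common sequence {k_n} ⊂ [1,∞), k_n → 1, and suppose each T_i is uniformly L_i-Lipschitz. Suppose F = ⋂_{i=1}^N F(T_i) is nonempty and bounded, say F ⊆ {u ∈ C : ‖u‖ ≤ ω} for some ω > 0. Let {α_n} ⊂ [0,1] with α_n → 0, and set ε_n = (k_n − 1)(ω + ‖x_n‖)². Let {x_n} be generated by: x_0 ∈ C, C_0 = C; y_n^i = α_n x_n + (1 − α_n) T_i^n x_n for i = 1,…,N; choose i_n ∈ {1,…,N} with ‖y_n^{i_n} − x_n‖ = max_{1≤i≤N} ‖y_n^i − x_n‖ and set ȳ_n = y_n^{i_n}; C_{n+1} = {v ∈ C_n : ‖v − ȳ_n‖² ≤ ‖v − x_n‖² + ε_n}; and x_{n+1} is the metric projection of x_0 onto C_{n+1}. Then {x_n} converges strongly to the metric projection of x_0 onto F. -/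
/-!
The sets `Cₙ` are closed, convex and decreasing, and they contain `F`: the bound
`‖p - Tⁿx‖² ≤ kₙ‖p - x‖²` is exactly what puts every `p ∈ F` into the half-space that cuts
`Cₙ₊₁` out of `Cₙ`. As `xₙ` is the nearest point of `Cₙ` to `x₀`, the variational inequality of
the projection gives `‖xₙ - xₘ‖² ≤ ‖xₘ - x₀‖² - ‖xₙ - x₀‖²` for `n ≤ m`; the distances
`‖xₙ - x₀‖` increase and are bounded by `‖p - x₀‖`, so `(xₙ)` is Cauchy, and its limit `z` is the
nearest point of `⋂ Cₙ ⊇ F` to `x₀`. Membership `xₙ₊₁ ∈ Cₙ₊₁` and `εₙ → 0` force `ȳₙ → z`; by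
the choice of `iₙ` every `yₙⁱ → z`, hence `Tᵢⁿxₙ → z` since `αₙ → 0`, and uniform Lipschitz
continuity turns this into `Tᵢz = z`, so `z ∈ F`.
-/

open Filter Topology Set

theorem subset_of_succ_eq_sep {α : Type*} {S : ℕ → Set α} {P : ℕ → α → Prop} {F : Set α}
    (h0 : F ⊆ S 0) (hS : ∀ n, S (n + 1) = {v ∈ S n | P n v}) (hP : ∀ n, ∀ u ∈ F, P n u) :
    ∀ n, F ⊆ S n
  | 0 => h0
  | n + 1 => fun u hu => hS n ▸ ⟨subset_of_succ_eq_sep h0 hS hP n hu, hP n u hu⟩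

theorem norm_sub_convexComb_sq_le_add {E : Type*} [SeminormedAddCommGroup E] [NormedSpace ℝ E]
    {u x w : E} {t k ω : ℝ} (ht : t ∈ Icc (0 : ℝ) 1) (hk : 1 ≤ k) (hu : ‖u‖ ≤ ω)
    (hw : ‖u - w‖ ^ 2 ≤ k * ‖u - x‖ ^ 2) :
    ‖u - (t • x + (1 - t) • w)‖ ^ 2 ≤ ‖u - x‖ ^ 2 + (k - 1) * (ω + ‖x‖) ^ 2 := by
  have hconv :
      ‖u - (t • x + (1 - t) • w)‖ ^ 2 ≤ t * ‖u - x‖ ^ 2 + (1 - t) * ‖u - w‖ ^ 2 := by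
    have hsplit : u - (t • x + (1 - t) • w) = t • (u - x) + (1 - t) • (u - w) := by module
    rw [hsplit]
    simpa using (convexOn_univ_norm.pow (fun _ _ => norm_nonneg _) 2).2 (mem_univ (u - x))
      (mem_univ (u - w)) ht.1 (sub_nonneg.2 ht.2) (add_sub_cancel _ _)
  have hux : ‖u - x‖ ^ 2 ≤ (ω + ‖x‖) ^ 2 :=
    pow_le_pow_left₀ (norm_nonneg _) ((norm_sub_le _ _).trans (by linarith)) 2
  nlinarith [mul_le_mul_of_nonneg_left hw (sub_nonneg.2 ht.2),
    mul_le_mul_of_nonneg_left hux (sub_nonneg.2 hk),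
    mul_nonneg (mul_nonneg ht.1 (sub_nonneg.2 hk)) (sq_nonneg ‖u - x‖)]

theorem isClosed_setOf_norm_sub_sq_le {E : Type*} [SeminormedAddCommGroup E] (a b : E) (c : ℝ) :
    IsClosed {v : E | ‖v - a‖ ^ 2 ≤ ‖v - b‖ ^ 2 + c} :=
  isClosed_le (by fun_prop) (by fun_prop)

theorem cauchySeq_of_sq_dist_le_sub {X : Type*} [PseudoMetricSpace X] {x : ℕ → X}
    {a : ℕ → ℝ} (ha : Monotone a) (hbdd : BddAbove (range a))
    (h : ∀ n m, n ≤ m → dist (x n) (x m) ^ 2 ≤ a m - a n) : CauchySeq x := by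
  refine cauchySeq_of_le_tendsto_0 (fun N => 2 * √((⨆ n, a n) - a N)) (fun n m N hn hm => ?_) ?_
  · have hN : ∀ n, N ≤ n → dist (x N) (x n) ≤ √((⨆ n, a n) - a N) := fun n hn =>
      Real.le_sqrt_of_sq_le ((h N n hn).trans (by linarith [le_ciSup hbdd n]))
    linarith [dist_triangle_left (x n) (x m) (x N), hN n hn, hN m hm]
  · simpa using ((tendsto_atTop_ciSup ha hbdd).const_sub (⨆ n, a n)).sqrt.const_mul 2

section InnerProductSpace

variable {H : Type*} [NormedAddCommGroup H] [InnerProductSpace ℝ H]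

theorem convex_setOf_norm_sub_sq_le (a b : H) (c : ℝ) :
    Convex ℝ {v : H | ‖v - a‖ ^ 2 ≤ ‖v - b‖ ^ 2 + c} := by
  have hhalf : {v : H | ‖v - a‖ ^ 2 ≤ ‖v - b‖ ^ 2 + c} =
      {v | inner ℝ v (b - a) ≤ (‖b‖ ^ 2 - ‖a‖ ^ 2 + c) / 2} := by
    ext v
    simp only [mem_ofPred_eq, norm_sub_sq_real, inner_sub_right]
    constructor <;> intro h <;> linarith
  rw [hhalf]
  exact convex_halfSpace_le
    ⟨fun u v => inner_add_left u v _, fun r u => real_inner_smul_left u _ r⟩ _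

theorem convex_and_isClosed_of_succ_eq_sep {C : Set H} (hCcv : Convex ℝ C) (hCcl : IsClosed C)
    {S : ℕ → Set H} {a b : ℕ → H} {c : ℕ → ℝ} (h0 : S 0 = C)
    (hS : ∀ n, S (n + 1) = {v ∈ S n | ‖v - a n‖ ^ 2 ≤ ‖v - b n‖ ^ 2 + c n}) :
    ∀ n, Convex ℝ (S n) ∧ IsClosed (S n)
  | 0 => h0 ▸ ⟨hCcv, hCcl⟩
  | n + 1 =>
    have ih := convex_and_isClosed_of_succ_eq_sep hCcv hCcl h0 hS n
    hS n ▸ ⟨ih.1.inter (convex_setOf_norm_sub_sq_le _ _ _),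
      ih.2.inter (isClosed_setOf_norm_sub_sq_le _ _ _)⟩

theorem norm_sub_sq_add_norm_sub_sq_le_of_isMinOn {K : Set H} (hK : Convex ℝ K) {u v x₀ : H}
    (hu : u ∈ K) (hmin : IsMinOn (‖· - x₀‖) K u) (hv : v ∈ K) :
    ‖u - x₀‖ ^ 2 + ‖v - u‖ ^ 2 ≤ ‖v - x₀‖ ^ 2 := by
  have : Nonempty K := ⟨⟨u, hu⟩⟩
  have hinf : ‖x₀ - u‖ = ⨅ w : K, ‖x₀ - w‖ := by
    refine le_antisymm (le_ciInf fun w => ?_)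
      (ciInf_le (f := fun w : K => ‖x₀ - w‖) ⟨0, ?_⟩ ⟨u, hu⟩)
    · simpa only [norm_sub_rev x₀] using isMinOn_iff.1 hmin w w.2
    · rintro _ ⟨w, rfl⟩
      exact norm_nonneg _
  have hinner := (norm_eq_iInf_iff_real_inner_le_zero hK hu).1 hinf v hv
  have hexpand : ‖v - x₀‖ ^ 2 = ‖(v - u) - (x₀ - u)‖ ^ 2 := by congr 2; abel
  rw [hexpand, norm_sub_rev u x₀, norm_sub_sq_real (v - u), real_inner_comm]
  linarith

theorem exists_tendsto_isMinOn_iInter [CompleteSpace H] {S : ℕ → Set H} (hS : Antitone S)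
    (hSc : ∀ n, Convex ℝ (S n)) (hScl : ∀ n, IsClosed (S n)) (hne : (⋂ n, S n).Nonempty)
    {x : ℕ → H} {x₀ : H} (hxS : ∀ n, x n ∈ S n) (hmin : ∀ n, IsMinOn (‖· - x₀‖) (S n) (x n)) :
    ∃ z ∈ ⋂ n, S n, IsMinOn (‖· - x₀‖) (⋂ n, S n) z ∧ Tendsto x atTop (𝓝 z) := by
  obtain ⟨p, hp⟩ := hne
  have hmono : Monotone fun n => ‖x n - x₀‖ ^ 2 := fun n m hnm =>
    pow_le_pow_left₀ (norm_nonneg _) (isMinOn_iff.1 (hmin n) _ (hS hnm (hxS m))) 2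
  have hbdd : BddAbove (range fun n => ‖x n - x₀‖ ^ 2) := by
    refine ⟨‖p - x₀‖ ^ 2, forall_mem_range.2 fun n => ?_⟩
    exact pow_le_pow_left₀ (norm_nonneg _) (isMinOn_iff.1 (hmin n) _ (mem_iInter.1 hp n)) 2
  have hcauchy : CauchySeq x := cauchySeq_of_sq_dist_le_sub hmono hbdd fun n m hnm => by
    have := norm_sub_sq_add_norm_sub_sq_le_of_isMinOn (hSc n) (hxS n) (hmin n) (hS hnm (hxS m))
    rw [dist_eq_norm, norm_sub_rev]
    linarith
  obtain ⟨z, hz⟩ := cauchySeq_tendsto_of_complete hcauchy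
  refine ⟨z, mem_iInter.2 fun n => (hScl n).mem_of_tendsto hz ?_,
    isMinOn_iff.2 fun v hv => ?_, hz⟩
  · exact eventually_atTop.2 ⟨n, fun m hm => hS hm (hxS m)⟩
  · exact le_of_tendsto (hz.sub_const x₀).norm
      (Eventually.of_forall fun n => isMinOn_iff.1 (hmin n) v (mem_iInter.1 hv n))

end InnerProductSpace

theorem tendsto_of_norm_succ_sub_sq_le {E : Type*} [NormedAddCommGroup E] {x y : ℕ → E}
    {ε : ℕ → ℝ} {z : E} (hx : Tendsto x atTop (𝓝 z)) (hε : Tendsto ε atTop (𝓝 0))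
    (h : ∀ n, ‖x (n + 1) - y n‖ ^ 2 ≤ ‖x (n + 1) - x n‖ ^ 2 + ε n) :
    Tendsto y atTop (𝓝 z) := by
  have hx₁ : Tendsto (fun n => x (n + 1)) atTop (𝓝 z) := hx.comp (tendsto_add_atTop_nat 1)
  have hsq : Tendsto (fun n => ‖x (n + 1) - y n‖ ^ 2) atTop (𝓝 0) :=
    squeeze_zero (fun _ => sq_nonneg _) h (by simpa using ((hx₁.sub hx).norm.pow 2).add hε)
  have hgap : Tendsto (fun n => x (n + 1) - y n) atTop (𝓝 0) := by
    rw [tendsto_zero_iff_norm_tendsto_zero]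
    simpa using hsq.sqrt
  simpa using hx₁.sub hgap

theorem tendsto_of_tendsto_convexComb {ι E : Type*} [NormedAddCommGroup E] [NormedSpace ℝ E]
    {l : Filter ι} {α : ι → ℝ} {x y w : ι → E} {z : E} (hα : Tendsto α l (𝓝 0))
    (hx : Tendsto x l (𝓝 z)) (hy : Tendsto y l (𝓝 z))
    (h : ∀ i, y i = α i • x i + (1 - α i) • w i) : Tendsto w l (𝓝 z) := by
  have hlim : Tendsto (fun i => (1 - α i)⁻¹ • (y i - α i • x i)) l (𝓝 z) := by
    have hinv : Tendsto (fun i => (1 - α i)⁻¹) l (𝓝 1) := by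
      simpa using ((tendsto_const_nhds (x := (1 : ℝ))).sub hα).inv₀ (by norm_num)
    simpa using hinv.smul (hy.sub (hα.smul hx))
  refine hlim.congr' ?_
  filter_upwards [hα.eventually_ne zero_ne_one] with i hi
  rw [h i, add_sub_cancel_left, smul_smul, inv_mul_cancel₀ (sub_ne_zero.2 hi.symm), one_smul]

theorem tendsto_of_norm_sub_le_mul_norm_sub {ι E F : Type*} [SeminormedAddCommGroup E]
    [SeminormedAddCommGroup F] {l : Filter ι} {f f' : ι → E} {g g' : ι → F} {c : E} {d : F}
    {L : ℝ} (h : ∀ i, ‖f i - f' i‖ ≤ L * ‖g i - g' i‖) (hg : Tendsto g l (𝓝 d))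
    (hg' : Tendsto g' l (𝓝 d)) (hf' : Tendsto f' l (𝓝 c)) : Tendsto f l (𝓝 c) := by
  have hgap : Tendsto (fun i => f i - f' i) l (𝓝 0) := by
    rw [tendsto_zero_iff_norm_tendsto_zero]
    refine squeeze_zero (fun _ => norm_nonneg _) h ?_
    simpa using (hg.sub hg').norm.const_mul L
  simpa using hgap.add hf'

theorem isFixedPt_of_tendsto_iterate_apply {E : Type*} [NormedAddCommGroup E] {C : Set E}
    {T : E → E} {L : ℝ} (hT : MapsTo T C C)
    (hLip : ∀ n, 1 ≤ n → ∀ x ∈ C, ∀ y ∈ C, ‖T^[n] x - T^[n] y‖ ≤ L * ‖x - y‖)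
    {x : ℕ → E} {z : E} (hxC : ∀ n, x n ∈ C) (hzC : z ∈ C) (hx : Tendsto x atTop (𝓝 z))
    (hTx : Tendsto (fun n => T^[n] (x n)) atTop (𝓝 z)) : Function.IsFixedPt T z := by
  have hshift := tendsto_add_atTop_nat 1
  have h₁ : Tendsto (fun n => T^[n + 1] (x n)) atTop (𝓝 (T z)) := by
    simp only [Function.iterate_succ_apply']
    exact tendsto_of_norm_sub_le_mul_norm_sub
      (fun n => by simpa using hLip 1 le_rfl _ (hT.iterate n (hxC n)) z hzC)
      hTx tendsto_const_nhds tendsto_const_nhds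
  have h₂ : Tendsto (fun n => T^[n + 1] (x n)) atTop (𝓝 z) :=
    tendsto_of_norm_sub_le_mul_norm_sub
      (fun n => hLip (n + 1) n.succ_pos _ (hxC n) _ (hxC (n + 1)))
      hx (hx.comp hshift) (hTx.comp hshift)
  exact tendsto_nhds_unique h₁ h₂

theorem stmt_0_general
    {H : Type*} [NormedAddCommGroup H] [InnerProductSpace ℝ H] [CompleteSpace H]
    (C : Set H) (hCcl : IsClosed C) (hCcv : Convex ℝ C)
    (N : ℕ) (hN : 0 < N) (T : Fin N → H → H) (hTmaps : ∀ i, Set.MapsTo (T i) C C)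
    (k : ℕ → ℝ) (hk : ∀ n, 1 ≤ k n) (hklim : Tendsto k atTop (𝓝 1))
    (hAQN : ∀ i, ∀ n, 1 ≤ n → ∀ p ∈ C, T i p = p →
      ∀ x ∈ C, ‖p - (T i)^[n] x‖ ^ 2 ≤ k n * ‖p - x‖ ^ 2)
    (L : Fin N → ℝ)
    (hLip : ∀ i, ∀ n, 1 ≤ n → ∀ x ∈ C, ∀ y ∈ C,
      ‖(T i)^[n] x - (T i)^[n] y‖ ≤ L i * ‖x - y‖)
    (F : Set H) (hF : F = ⋂ i, {x ∈ C | T i x = x}) (hFne : F.Nonempty)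
    (ω : ℝ) (hFbdd : ∀ u ∈ F, ‖u‖ ≤ ω)
    (α : ℕ → ℝ) (hα : ∀ n, α n ∈ Set.Icc (0 : ℝ) 1) (hαlim : Tendsto α atTop (𝓝 0))
    (x : ℕ → H) (y : ℕ → Fin N → H) (i_ : ℕ → Fin N) (CS : ℕ → Set H)
    (hx0 : x 0 ∈ C) (hCS0 : CS 0 = C)
    (hy : ∀ n i, y n i = α n • x n + (1 - α n) • (T i)^[n] (x n))
    (hmax : ∀ n i, ‖y n i - x n‖ ≤ ‖y n (i_ n) - x n‖)
    (hCS : ∀ n, CS (n + 1) =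
      {v ∈ CS n | ‖v - y n (i_ n)‖ ^ 2 ≤ ‖v - x n‖ ^ 2 + (k n - 1) * (ω + ‖x n‖) ^ 2})
    (hproj : ∀ n, x (n + 1) ∈ CS (n + 1) ∧
      ∀ v ∈ CS (n + 1), ‖x (n + 1) - x 0‖ ≤ ‖v - x 0‖) :
    ∃ z ∈ F, (∀ v ∈ F, ‖z - x 0‖ ≤ ‖v - x 0‖) ∧ Tendsto x atTop (𝓝 z) := by
  have hFfix : ∀ u ∈ F, u ∈ C ∧ ∀ i, T i u = u := fun u hu =>
    have hu' := mem_iInter.1 (hF ▸ hu)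
    ⟨(hu' ⟨0, hN⟩).1, fun i => (hu' i).2⟩
  have hxCS : ∀ n, x n ∈ CS n
    | 0 => hCS0 ▸ hx0
    | n + 1 => (hproj n).1
  have hanti : Antitone CS := antitone_nat_of_succ_le fun n => hCS n ▸ sep_subset _ _
  have hxC : ∀ n, x n ∈ C := fun n => hCS0 ▸ hanti n.zero_le (hxCS n)
  have hFCS : ∀ n, F ⊆ CS n :=
    subset_of_succ_eq_sep (hCS0 ▸ fun u hu => (hFfix u hu).1) hCS fun n u hu => by
      obtain ⟨huC, hufix⟩ := hFfix u hu
      have hAQN₀ : ‖u - (T (i_ n))^[n] (x n)‖ ^ 2 ≤ k n * ‖u - x n‖ ^ 2 := by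
        rcases n with _ | n
        · exact le_mul_of_one_le_left (sq_nonneg _) (hk 0)
        · exact hAQN _ _ n.succ_pos u huC (hufix _) _ (hxC _)
      exact hy n (i_ n) ▸ norm_sub_convexComb_sq_le_add (hα n) (hk n) (hFbdd u hu) hAQN₀
  have hmin : ∀ n, IsMinOn (‖· - x 0‖) (CS n) (x n)
    | 0 => isMinOn_iff.2 fun v _ => by simp
    | n + 1 => isMinOn_iff.2 (hproj n).2
  have hCSc := convex_and_isClosed_of_succ_eq_sep hCcv hCcl hCS0 hCS
  obtain ⟨z, hzCS, hzmin, hz⟩ := exists_tendsto_isMinOn_iInter hanti (fun n => (hCSc n).1)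
    (fun n => (hCSc n).2) (hFne.mono (subset_iInter hFCS)) hxCS hmin
  have hzC : z ∈ C := hCS0 ▸ mem_iInter.1 hzCS 0
  have hε : Tendsto (fun n => (k n - 1) * (ω + ‖x n‖) ^ 2) atTop (𝓝 0) := by
    simpa using (hklim.sub_const 1).mul ((hz.norm.const_add ω).pow 2)
  have hybar : Tendsto (fun n => y n (i_ n)) atTop (𝓝 z) :=
    tendsto_of_norm_succ_sub_sq_le hz hε fun n => (hCS n ▸ hxCS (n + 1)).2
  have hyi : ∀ i, Tendsto (fun n => y n i) atTop (𝓝 z) := fun i =>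
    tendsto_of_norm_sub_le_mul_norm_sub (L := 1) (fun n => by simpa using hmax n i) hybar hz hz
  have hzF : z ∈ F := hF ▸ mem_iInter.2 fun i => ⟨hzC, isFixedPt_of_tendsto_iterate_apply
    (hTmaps i) (hLip i) hxC hzC hz (tendsto_of_tendsto_convexComb hαlim hz (hyi i) (hy · i))⟩
  exact ⟨z, hzF, isMinOn_iff.1 (hzmin.on_subset (subset_iInter hFCS)), hz⟩

/-- Parallel hybrid method for a finite family of asymptotically quasi-nonexpansive
mappings in a real Hilbert space (Theorem 3.1, Hilbert-space form). -/
theorem stmt_0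
    {H : Type*} [NormedAddCommGroup H] [InnerProductSpace ℝ H] [CompleteSpace H]
    (C : Set H) (hCne : C.Nonempty) (hCcl : IsClosed C) (hCcv : Convex ℝ C)
    (N : ℕ) (hN : 0 < N) (T : Fin N → H → H) (hTmaps : ∀ i, Set.MapsTo (T i) C C)
    (k : ℕ → ℝ) (hk : ∀ n, 1 ≤ k n) (hklim : Tendsto k atTop (𝓝 1))
    (hAQN : ∀ i, ∀ n, 1 ≤ n → ∀ p ∈ C, T i p = p →
      ∀ x ∈ C, ‖p - (T i)^[n] x‖ ^ 2 ≤ k n * ‖p - x‖ ^ 2)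
    (L : Fin N → ℝ)
    (hLip : ∀ i, ∀ n, 1 ≤ n → ∀ x ∈ C, ∀ y ∈ C,
      ‖(T i)^[n] x - (T i)^[n] y‖ ≤ L i * ‖x - y‖)
    (F : Set H) (hF : F = ⋂ i, {x ∈ C | T i x = x}) (hFne : F.Nonempty)
    (ω : ℝ) (hω : 0 < ω) (hFbdd : ∀ u ∈ F, ‖u‖ ≤ ω)
    (α : ℕ → ℝ) (hα : ∀ n, α n ∈ Set.Icc (0 : ℝ) 1) (hαlim : Tendsto α atTop (𝓝 0))
    (x : ℕ → H) (y : ℕ → Fin N → H) (i_ : ℕ → Fin N) (CS : ℕ → Set H)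
    (hx0 : x 0 ∈ C) (hCS0 : CS 0 = C)
    (hy : ∀ n i, y n i = α n • x n + (1 - α n) • (T i)^[n] (x n))
    (hmax : ∀ n i, ‖y n i - x n‖ ≤ ‖y n (i_ n) - x n‖)
    (hCS : ∀ n, CS (n + 1) =
      {v ∈ CS n | ‖v - y n (i_ n)‖ ^ 2 ≤ ‖v - x n‖ ^ 2 + (k n - 1) * (ω + ‖x n‖) ^ 2})
    (hproj : ∀ n, x (n + 1) ∈ CS (n + 1) ∧
      ∀ v ∈ CS (n + 1), ‖x (n + 1) - x 0‖ ≤ ‖v - x 0‖) :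
    ∃ z ∈ F, (∀ v ∈ F, ‖z - x 0‖ ≤ ‖v - x 0‖) ∧ Tendsto x atTop (𝓝 z) :=
  stmt_0_general C hCcl hCcv N hN T hTmaps k hk hklim hAQN L hLip F hF hFne ω hFbdd α hα hαlim x y
    i_ CS hx0 hCS0 hy hmax hCS hproj
end

section
/- Let H be a real Hilbert space and C a nonempty closed convex subset of H. Let T_1,…,T_N : C → C be asymptotically quasi-nonexpansive mappings with a common sequence {k_n} ⊂ [1,∞), k_n → 1, and suppose each T_i is uniformly L_i-Lipschitz. Suppose F = ⋂_{i=1}^N F(T_i) is nonempty and bounded, say F ⊆ {u ∈ C : ‖u‖ ≤ ω} for some ω > 0. Let {α_n} ⊂ [0,1] with α_n → 0, and set ε_n = (k_n − 1)(ω + ‖x_n‖)². Let {x_n} be generated by: x_0 ∈ C, C_0 = C; y_n^i = α_n x_0 + (1 − α_n) T_i^n x_n for i = 1,…,N; choose i_n ∈ {1,…,N} with ‖y_n^{i_n} − x_n‖ = max_{1≤i≤N} ‖y_n^i − x_n‖ and set ȳ_n = y_n^{i_n}; C_{n+1} = {v ∈ C_n : ‖v − ȳ_n‖² ≤ α_n‖v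 − x_0‖² + (1 − α_n)‖v − x_n‖² + ε_n}; and x_{n+1} is the metric projection of x_0 onto C_{n+1}. Then {x_n} converges strongly to the metric projection of x_0 onto F. -/
open Filter Topology RealInnerProductSpace

section Aux
variable {H : Type*} [NormedAddCommGroup H] [InnerProductSpace ℝ H]

theorem aux_sq_convex (a b : H) (α : ℝ) (h0 : 0 ≤ α) (h1 : α ≤ 1) :
    ‖α • a + (1 - α) • b‖ ^ 2 ≤ α * ‖a‖ ^ 2 + (1 - α) * ‖b‖ ^ 2 := by
  have h := norm_add_le (α • a) ((1 - α) • b)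
  rw [norm_smul, norm_smul, Real.norm_eq_abs, Real.norm_eq_abs,
    abs_of_nonneg h0, abs_of_nonneg (by linarith)] at h
  have h2 := pow_le_pow_left₀ (norm_nonneg _) h 2
  nlinarith [h2, mul_nonneg (mul_nonneg h0 (sub_nonneg.2 h1)) (sq_nonneg (‖a‖ - ‖b‖))]

theorem aux_le_max_one (a c : ℝ) (ha : 0 ≤ a) (h : a ^ 2 ≤ c) : a ≤ max 1 c := by
  rcases le_or_gt a 1 with h1 | h1
  · exact le_trans h1 (le_max_left _ _)
  · nlinarith [le_max_right (1:ℝ) c]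

theorem aux_expand (a b u v : H) (α : ℝ) :
    ‖v - u‖ ^ 2 - α * ‖v - a‖ ^ 2 - (1 - α) * ‖v - b‖ ^ 2 =
      ⟪v, (2:ℝ) • (α • a + (1 - α) • b - u)⟫ +
        (‖u‖ ^ 2 - α * ‖a‖ ^ 2 - (1 - α) * ‖b‖ ^ 2) := by
  simp only [norm_sub_sq_real, inner_smul_right, inner_sub_right, inner_add_right,
    real_inner_smul_right]
  ring

theorem aux_convex_half (w : H) (c : ℝ) : Convex ℝ {v : H | ⟪v, w⟫ ≤ c} := by
  intro p hp q hq θ σ hθ hσ hsum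
  simp only [Set.mem_setOf_eq, inner_add_left, real_inner_smul_left] at *
  have hc : θ * c + σ * c = c := by rw [← add_mul, hsum, one_mul]
  nlinarith [mul_le_mul_of_nonneg_left hp hθ, mul_le_mul_of_nonneg_left hq hσ]

theorem aux_closed_half (w : H) (c : ℝ) : IsClosed {v : H | ⟪v, w⟫ ≤ c} :=
  isClosed_le (Continuous.inner continuous_id continuous_const) continuous_const

theorem aux_sqrt_tendsto (f : ℕ → H) (h : Tendsto (fun n => ‖f n‖ ^ 2) atTop (𝓝 0)) :
    Tendsto (fun n => ‖f n‖) atTop (𝓝 0) := by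
  have := h.sqrt
  simp only [Real.sqrt_sq (norm_nonneg _), Real.sqrt_zero] at this
  exact this
end Aux

/-- Modified parallel hybrid method (Theorem 3.4, Hilbert-space form): the convex
combination is taken with the starting point `x 0`. -/
theorem stmt_2
    {H : Type*} [NormedAddCommGroup H] [InnerProductSpace ℝ H] [CompleteSpace H]
    (C : Set H) (hCne : C.Nonempty) (hCcl : IsClosed C) (hCcv : Convex ℝ C)
    (N : ℕ) (hN : 0 < N) (T : Fin N → H → H) (hTmaps : ∀ i, Set.MapsTo (T i) C C)
    (k : ℕ → ℝ) (hk : ∀ n, 1 ≤ k n) (hklim : Tendsto k atTop (𝓝 1))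
    (hAQN : ∀ i, ∀ n, 1 ≤ n → ∀ p ∈ C, T i p = p →
      ∀ x ∈ C, ‖p - (T i)^[n] x‖ ^ 2 ≤ k n * ‖p - x‖ ^ 2)
    (L : Fin N → ℝ)
    (hLip : ∀ i, ∀ n, 1 ≤ n → ∀ x ∈ C, ∀ y ∈ C,
      ‖(T i)^[n] x - (T i)^[n] y‖ ≤ L i * ‖x - y‖)
    (F : Set H) (hF : F = ⋂ i, {x ∈ C | T i x = x}) (hFne : F.Nonempty)
    (ω : ℝ) (hω : 0 < ω) (hFbdd : ∀ u ∈ F, ‖u‖ ≤ ω)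
    (α : ℕ → ℝ) (hα : ∀ n, α n ∈ Set.Icc (0 : ℝ) 1) (hαlim : Tendsto α atTop (𝓝 0))
    (x : ℕ → H) (y : ℕ → Fin N → H) (i_ : ℕ → Fin N) (CS : ℕ → Set H)
    (hx0 : x 0 ∈ C) (hCS0 : CS 0 = C)
    (hy : ∀ n i, y n i = α n • x 0 + (1 - α n) • (T i)^[n] (x n))
    (hmax : ∀ n i, ‖y n i - x n‖ ≤ ‖y n (i_ n) - x n‖)
    (hCS : ∀ n, CS (n + 1) =
      {v ∈ CS n | ‖v - y n (i_ n)‖ ^ 2 ≤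
        α n * ‖v - x 0‖ ^ 2 + (1 - α n) * ‖v - x n‖ ^ 2 + (k n - 1) * (ω + ‖x n‖) ^ 2})
    (hproj : ∀ n, x (n + 1) ∈ CS (n + 1) ∧
      ∀ v ∈ CS (n + 1), ‖x (n + 1) - x 0‖ ≤ ‖v - x 0‖) :
    ∃ z ∈ F, (∀ v ∈ F, ‖z - x 0‖ ≤ ‖v - x 0‖) ∧ Tendsto x atTop (𝓝 z) := by
  obtain ⟨p, hp⟩ := hFne
  have hα0 : ∀ n, 0 ≤ α n := fun n => (hα n).1
  have hα1 : ∀ n, α n ≤ 1 := fun n => (hα n).2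
  have hFmem : ∀ q ∈ F, q ∈ C ∧ ∀ i, T i q = q := by
    intro q hq
    rw [hF, Set.mem_iInter] at hq
    exact ⟨(hq ⟨0, hN⟩).1, fun i => (hq i).2⟩
  have hCSmono : ∀ n, CS (n + 1) ⊆ CS n := by
    intro n; rw [hCS n]; exact Set.sep_subset _ _
  have hCSsubC : ∀ n, CS n ⊆ C := by
    intro n; induction n with
    | zero => rw [hCS0]
    | succ m ih => exact (hCSmono m).trans ih
  have hCSanti : ∀ {m n : ℕ}, n ≤ m → CS m ⊆ CS n := by
    intro m n h
    induction h with
    | refl => exact subset_rfl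
    | step _ ih => exact (hCSmono _).trans ih
  have hxCS : ∀ n, x n ∈ CS n := by
    intro n; cases n with
    | zero => rw [hCS0]; exact hx0
    | succ m => exact (hproj m).1
  have hxC : ∀ n, x n ∈ C := fun n => hCSsubC n (hxCS n)
  have hxmCS : ∀ m n, n ≤ m → x m ∈ CS n := fun m n h => hCSanti h (hxCS m)
  have hTit : ∀ (i : Fin N) (n : ℕ) (u : H), u ∈ C → (T i)^[n] u ∈ C :=
    fun i n u hu => (hTmaps i).iterate n hu
  have hAQNall : ∀ (i : Fin N) (n : ℕ), ∀ q ∈ F, ∀ u ∈ C,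
      ‖q - (T i)^[n] u‖ ^ 2 ≤ k n * ‖q - u‖ ^ 2 := by
    intro i n q hq u hu
    obtain ⟨hqC, hqfix⟩ := hFmem q hq
    cases n with
    | zero =>
      simp only [Function.iterate_zero, id_eq]
      nlinarith [hk 0, sq_nonneg ‖q - u‖]
    | succ m => exact hAQN i (m + 1) (Nat.succ_le_succ (Nat.zero_le m)) q hqC (hqfix i) u hu
  -- F ⊆ CS n
  have hFCS : ∀ n, F ⊆ CS n := by
    intro n; induction n with
    | zero => rw [hCS0]; exact fun q hq => (hFmem q hq).1
    | succ m ih =>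
      intro q hq
      rw [hCS m]
      refine ⟨ih hq, ?_⟩
      have hqy : q - y m (i_ m) =
          α m • (q - x 0) + (1 - α m) • (q - (T (i_ m))^[m] (x m)) := by
        rw [hy]; module
      have h1 : ‖q - y m (i_ m)‖ ^ 2 ≤
          α m * ‖q - x 0‖ ^ 2 + (1 - α m) * ‖q - (T (i_ m))^[m] (x m)‖ ^ 2 := by
        rw [hqy]; exact aux_sq_convex _ _ _ (hα0 m) (hα1 m)
      have h2 := hAQNall (i_ m) m q hq (x m) (hxC m)
      have h3 : ‖q - x m‖ ≤ ω + ‖x m‖ :=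
        le_trans (norm_sub_le _ _) (by linarith [hFbdd q hq])
      have h4 : ‖q - x m‖ ^ 2 ≤ (ω + ‖x m‖) ^ 2 := pow_le_pow_left₀ (norm_nonneg _) h3 2
      nlinarith [hk m, hα0 m, hα1 m, sq_nonneg ‖q - x m‖,
        mul_nonneg (sub_nonneg.2 (hk m)) (sub_nonneg.2 h4),
        mul_nonneg (mul_nonneg (sub_nonneg.2 (hk m)) (hα0 m)) (sq_nonneg ‖q - x m‖)]
  -- CS n convex and closed
  have hCScc : ∀ n, Convex ℝ (CS n) ∧ IsClosed (CS n) := by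
    intro n; induction n with
    | zero => rw [hCS0]; exact ⟨hCcv, hCcl⟩
    | succ m ih =>
      have hrw : CS (m + 1) = CS m ∩
          {v : H | ⟪v, (2:ℝ) • (α m • x 0 + (1 - α m) • x m - y m (i_ m))⟫ ≤
            (k m - 1) * (ω + ‖x m‖) ^ 2 -
              (‖y m (i_ m)‖ ^ 2 - α m * ‖x 0‖ ^ 2 - (1 - α m) * ‖x m‖ ^ 2)} := by
        rw [hCS m]; ext v
        have hexp := aux_expand (x 0) (x m) (y m (i_ m)) v (α m)
        simp only [Set.mem_sep_iff, Set.mem_inter_iff, Set.mem_setOf_eq]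
        constructor
        · rintro ⟨ha, hb⟩; exact ⟨ha, by linarith⟩
        · rintro ⟨ha, hb⟩; exact ⟨ha, by linarith⟩
      rw [hrw]
      exact ⟨ih.1.inter (aux_convex_half _ _), ih.2.inter (aux_closed_half _ _)⟩
  -- boundedness and monotonicity of ‖x n - x 0‖
  have hxx0 : ∀ n, ‖x n - x 0‖ ≤ ‖p - x 0‖ := by
    intro n; cases n with
    | zero => simp
    | succ m => exact (hproj m).2 p (hFCS (m + 1) hp)
  have hmono : Monotone (fun n => ‖x (n + 1) - x 0‖) := by
    apply monotone_nat_of_le_succ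
    intro n
    exact (hproj n).2 _ (hCSmono (n + 1) (hxCS (n + 2)))
  have hbdd : BddAbove (Set.range fun n => ‖x (n + 1) - x 0‖) := by
    refine ⟨‖p - x 0‖, ?_⟩
    rintro _ ⟨n, rfl⟩
    exact hxx0 (n + 1)
  set ℓ : ℝ := ⨆ n, ‖x (n + 1) - x 0‖ with hℓdef
  have hsl : Tendsto (fun n => ‖x (n + 1) - x 0‖) atTop (𝓝 ℓ) :=
    tendsto_atTop_ciSup hmono hbdd
  have hsle : ∀ n, ‖x (n + 1) - x 0‖ ≤ ℓ := fun n => le_ciSup hbdd n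
  -- key quadratic estimate
  have hkey : ∀ m n : ℕ, n + 1 ≤ m →
      ‖x m - x (n + 1)‖ ^ 2 ≤ 2 * ‖x m - x 0‖ ^ 2 - 2 * ‖x (n + 1) - x 0‖ ^ 2 := by
    intro m n hmn
    have hmid : (1/2 : ℝ) • x m + (1/2 : ℝ) • x (n + 1) ∈ CS (n + 1) :=
      (hCScc (n + 1)).1 (hxmCS m (n + 1) hmn) (hxCS (n + 1))
        (by norm_num) (by norm_num) (by norm_num)
    have h1 : ‖x (n + 1) - x 0‖ ≤ ‖(1/2 : ℝ) • x m + (1/2 : ℝ) • x (n + 1) - x 0‖ := by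
      have := (hproj n).2 _ hmid
      linarith [this]
    have hpar := parallelogram_law_with_norm ℝ (x m - x 0) (x (n + 1) - x 0)
    have heq : x m - x 0 + (x (n + 1) - x 0) =
        (2 : ℝ) • ((1/2 : ℝ) • x m + (1/2 : ℝ) • x (n + 1) - x 0) := by module
    have heq2 : x m - x 0 - (x (n + 1) - x 0) = x m - x (n + 1) := by abel
    rw [heq, heq2, norm_smul] at hpar
    simp only [Real.norm_ofNat] at hpar
    nlinarith [hpar, mul_self_le_mul_self (norm_nonneg _) h1]
  -- Cauchy
  have hcauchy : CauchySeq x := by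
    rw [Metric.cauchySeq_iff']
    intro ε hε
    have hsq : Tendsto (fun n => ‖x (n + 1) - x 0‖ ^ 2) atTop (𝓝 (ℓ ^ 2)) := hsl.pow 2
    obtain ⟨M, hM⟩ := (Metric.tendsto_atTop.1 hsq) (ε ^ 2 / 4) (by positivity)
    refine ⟨M + 1, ?_⟩
    intro n hn
    obtain ⟨m, rfl⟩ : ∃ m, n = m + 1 := ⟨n - 1, by omega⟩
    have hk1 := hkey (m + 1) M (by omega)
    have hle1 : ‖x (m + 1) - x 0‖ ≤ ℓ := hsle m
    have hle2 : ‖x (m + 1) - x 0‖ ^ 2 ≤ ℓ ^ 2 :=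
      pow_le_pow_left₀ (norm_nonneg _) hle1 2
    have hM' := hM M (le_refl M)
    rw [Real.dist_eq, abs_lt] at hM'
    rw [dist_eq_norm]
    by_contra hcon
    push_neg at hcon
    have : ε ^ 2 ≤ ‖x (m + 1) - x (M + 1)‖ ^ 2 :=
      pow_le_pow_left₀ (le_of_lt hε) hcon 2
    linarith
  obtain ⟨z, hz⟩ := cauchySeq_tendsto_of_complete hcauchy
  -- z in every CS n, hence in C
  have hzCS : ∀ n, z ∈ CS n := by
    intro n
    refine (hCScc n).2.mem_of_tendsto hz ?_
    filter_upwards [eventually_ge_atTop n] with m hm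
    exact hxmCS m n hm
  have hzC : z ∈ C := hCSsubC 0 (hzCS 0)
  -- limits
  have hx1z : Tendsto (fun n => x (n + 1)) atTop (𝓝 z) :=
    hz.comp (tendsto_add_atTop_nat 1)
  have hdiff0 : Tendsto (fun n => ‖x (n + 1) - x n‖) atTop (𝓝 0) := by
    have := (hx1z.sub hz).norm
    simpa using this
  have hxnorm : Tendsto (fun n => ‖x n‖) atTop (𝓝 ‖z‖) := hz.norm
  have hkl : Tendsto (fun n => k n - 1) atTop (𝓝 0) := by
    have := hklim.sub (tendsto_const_nhds (α := ℕ) (x := (1:ℝ)))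
    simpa using this
  have hεlim : Tendsto (fun n => (k n - 1) * (ω + ‖x n‖) ^ 2) atTop (𝓝 0) := by
    have := hkl.mul (((tendsto_const_nhds (α := ℕ) (x := ω)).add hxnorm).pow 2)
    simpa using this
  -- ‖x (n+1) - ȳ n‖ → 0
  have hyx1 : Tendsto (fun n => ‖x (n + 1) - y n (i_ n)‖) atTop (𝓝 0) := by
    apply aux_sqrt_tendsto
    apply squeeze_zero (fun n => sq_nonneg _)
      (g := fun n => α n * ‖x (n + 1) - x 0‖ ^ 2 + (1 - α n) * ‖x (n + 1) - x n‖ ^ 2 +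
        (k n - 1) * (ω + ‖x n‖) ^ 2)
    · intro n
      have := (hproj n).1
      rw [hCS n] at this
      exact this.2
    · have t1 : Tendsto (fun n => α n * ‖x (n + 1) - x 0‖ ^ 2) atTop (𝓝 0) := by
        have := hαlim.mul (((hx1z.sub (tendsto_const_nhds (x := x 0))).norm).pow 2)
        simpa using this
      have t2 : Tendsto (fun n => (1 - α n) * ‖x (n + 1) - x n‖ ^ 2) atTop (𝓝 0) := by
        have := ((tendsto_const_nhds (α := ℕ) (x := (1:ℝ))).sub hαlim).mul (hdiff0.pow 2)
        simpa using this
      have := (t1.add t2).add hεlim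
      simpa using this
  have hyx : Tendsto (fun n => ‖y n (i_ n) - x n‖) atTop (𝓝 0) := by
    apply squeeze_zero (fun n => norm_nonneg _)
      (g := fun n => ‖x (n + 1) - y n (i_ n)‖ + ‖x (n + 1) - x n‖)
    · intro n
      calc ‖y n (i_ n) - x n‖ = ‖(x (n+1) - x n) - (x (n+1) - y n (i_ n))‖ := by abel_nf
        _ ≤ ‖x (n+1) - x n‖ + ‖x (n+1) - y n (i_ n)‖ := norm_sub_le _ _
        _ = ‖x (n+1) - y n (i_ n)‖ + ‖x (n+1) - x n‖ := by ring
    · simpa using hyx1.add hdiff0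
  have hyi : ∀ i, Tendsto (fun n => ‖y n i - x n‖) atTop (𝓝 0) := fun i =>
    squeeze_zero (fun n => norm_nonneg _) (fun n => hmax n i) hyx
  -- ‖T_i^n x_n - x_n‖ → 0
  set B : ℝ := 2 * ‖p - x 0‖ with hBdef
  have hpB : ∀ n, ‖p - x n‖ ≤ B := by
    intro n
    calc ‖p - x n‖ = ‖(p - x 0) - (x n - x 0)‖ := by abel_nf
      _ ≤ ‖p - x 0‖ + ‖x n - x 0‖ := norm_sub_le _ _
      _ ≤ B := by rw [hBdef]; linarith [hxx0 n]
  have hTn : ∀ i, Tendsto (fun n => ‖(T i)^[n] (x n) - x n‖) atTop (𝓝 0) := by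
    intro i
    have hbound : ∀ n, ‖(T i)^[n] (x n) - x n‖ ≤
        α n * (max 1 (k n * B ^ 2) + ‖p - x 0‖) + ‖y n i - x n‖ := by
      intro n
      have hyT : y n i - (T i)^[n] (x n) = α n • (x 0 - (T i)^[n] (x n)) := by
        rw [hy]; module
      have hpT : ‖p - (T i)^[n] (x n)‖ ≤ max 1 (k n * B ^ 2) := by
        apply aux_le_max_one _ _ (norm_nonneg _)
        calc ‖p - (T i)^[n] (x n)‖ ^ 2 ≤ k n * ‖p - x n‖ ^ 2 :=
              hAQNall i n p hp (x n) (hxC n)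
          _ ≤ k n * B ^ 2 := by
              apply mul_le_mul_of_nonneg_left _ (le_trans zero_le_one (hk n))
              exact pow_le_pow_left₀ (norm_nonneg _) (hpB n) 2
      have hx0T : ‖x 0 - (T i)^[n] (x n)‖ ≤ max 1 (k n * B ^ 2) + ‖p - x 0‖ := by
        calc ‖x 0 - (T i)^[n] (x n)‖
            = ‖(p - (T i)^[n] (x n)) - (p - x 0)‖ := by abel_nf
          _ ≤ ‖p - (T i)^[n] (x n)‖ + ‖p - x 0‖ := norm_sub_le _ _
          _ ≤ max 1 (k n * B ^ 2) + ‖p - x 0‖ := by linarith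
      have h1 : ‖y n i - (T i)^[n] (x n)‖ ≤ α n * (max 1 (k n * B ^ 2) + ‖p - x 0‖) := by
        rw [hyT, norm_smul, Real.norm_eq_abs, abs_of_nonneg (hα0 n)]
        exact mul_le_mul_of_nonneg_left hx0T (hα0 n)
      calc ‖(T i)^[n] (x n) - x n‖
          = ‖(y n i - x n) - (y n i - (T i)^[n] (x n))‖ := by abel_nf
        _ ≤ ‖y n i - x n‖ + ‖y n i - (T i)^[n] (x n)‖ := norm_sub_le _ _
        _ ≤ α n * (max 1 (k n * B ^ 2) + ‖p - x 0‖) + ‖y n i - x n‖ := by linarith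
    apply squeeze_zero (fun n => norm_nonneg _) hbound
    have tb : Tendsto (fun n => α n * (max 1 (k n * B ^ 2) + ‖p - x 0‖)) atTop (𝓝 0) := by
      have tmax : Tendsto (fun n => max 1 (k n * B ^ 2)) atTop
          (𝓝 (max 1 (1 * B ^ 2))) :=
        (tendsto_const_nhds (α := ℕ) (x := (1:ℝ))).max (hklim.mul tendsto_const_nhds)
      have := hαlim.mul (tmax.add (tendsto_const_nhds (x := ‖p - x 0‖)))
      simpa using this
    simpa using tb.add (hyi i)
  -- ‖T_i x_n - x_n‖ → 0
  have hTx : ∀ i, Tendsto (fun n => ‖T i (x n) - x n‖) atTop (𝓝 0) := by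
    intro i
    set L' : ℝ := max (L i) 0 with hL'def
    have hLip' : ∀ (n : ℕ), 1 ≤ n → ∀ u ∈ C, ∀ v ∈ C,
        ‖(T i)^[n] u - (T i)^[n] v‖ ≤ L' * ‖u - v‖ := by
      intro n hn u hu v hv
      exact (hLip i n hn u hu v hv).trans
        (mul_le_mul_of_nonneg_right (le_max_left _ _) (norm_nonneg _))
    have hbound : ∀ n, ‖T i (x n) - x n‖ ≤
        L' * ‖(T i)^[n] (x n) - x n‖ + L' * ‖x (n + 1) - x n‖ +
          ‖(T i)^[n + 1] (x (n + 1)) - x (n + 1)‖ + ‖x (n + 1) - x n‖ := by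
      intro n
      have e1 : ‖T i (x n) - (T i)^[n + 1] (x n)‖ ≤ L' * ‖(T i)^[n] (x n) - x n‖ := by
        have := hLip' 1 le_rfl (x n) (hxC n) ((T i)^[n] (x n)) (hTit i n (x n) (hxC n))
        simp only [Function.iterate_one] at this
        rw [Function.iterate_succ_apply']
        calc ‖T i (x n) - T i ((T i)^[n] (x n))‖
            = ‖T i (x n) - T i ((T i)^[n] (x n))‖ := rfl
          _ ≤ L' * ‖x n - (T i)^[n] (x n)‖ := this
          _ = L' * ‖(T i)^[n] (x n) - x n‖ := by rw [norm_sub_rev]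
      have e2 : ‖(T i)^[n + 1] (x n) - (T i)^[n + 1] (x (n + 1))‖ ≤
          L' * ‖x (n + 1) - x n‖ := by
        have := hLip' (n + 1) (Nat.succ_le_succ (Nat.zero_le n)) (x n) (hxC n)
          (x (n + 1)) (hxC (n + 1))
        calc ‖(T i)^[n + 1] (x n) - (T i)^[n + 1] (x (n + 1))‖
            ≤ L' * ‖x n - x (n + 1)‖ := this
          _ = L' * ‖x (n + 1) - x n‖ := by rw [norm_sub_rev]
      calc ‖T i (x n) - x n‖
          = ‖(T i (x n) - (T i)^[n + 1] (x n)) +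
              ((T i)^[n + 1] (x n) - (T i)^[n + 1] (x (n + 1))) +
              ((T i)^[n + 1] (x (n + 1)) - x (n + 1)) + (x (n + 1) - x n)‖ := by abel_nf
        _ ≤ ‖(T i (x n) - (T i)^[n + 1] (x n)) +
              ((T i)^[n + 1] (x n) - (T i)^[n + 1] (x (n + 1))) +
              ((T i)^[n + 1] (x (n + 1)) - x (n + 1))‖ + ‖x (n + 1) - x n‖ :=
            norm_add_le _ _
        _ ≤ ‖(T i (x n) - (T i)^[n + 1] (x n)) +
              ((T i)^[n + 1] (x n) - (T i)^[n + 1] (x (n + 1)))‖ +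
              ‖(T i)^[n + 1] (x (n + 1)) - x (n + 1)‖ + ‖x (n + 1) - x n‖ := by
            linarith [norm_add_le ((T i (x n) - (T i)^[n + 1] (x n)) +
              ((T i)^[n + 1] (x n) - (T i)^[n + 1] (x (n + 1))))
              ((T i)^[n + 1] (x (n + 1)) - x (n + 1))]
        _ ≤ ‖T i (x n) - (T i)^[n + 1] (x n)‖ +
              ‖(T i)^[n + 1] (x n) - (T i)^[n + 1] (x (n + 1))‖ +
              ‖(T i)^[n + 1] (x (n + 1)) - x (n + 1)‖ + ‖x (n + 1) - x n‖ := by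
            linarith [norm_add_le (T i (x n) - (T i)^[n + 1] (x n))
              ((T i)^[n + 1] (x n) - (T i)^[n + 1] (x (n + 1)))]
        _ ≤ L' * ‖(T i)^[n] (x n) - x n‖ + L' * ‖x (n + 1) - x n‖ +
              ‖(T i)^[n + 1] (x (n + 1)) - x (n + 1)‖ + ‖x (n + 1) - x n‖ := by
            linarith
    apply squeeze_zero (fun n => norm_nonneg _) hbound
    have t3 : Tendsto (fun n => ‖(T i)^[n + 1] (x (n + 1)) - x (n + 1)‖) atTop (𝓝 0) :=
      (hTn i).comp (tendsto_add_atTop_nat 1)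
    have := (((hTn i).const_mul L').add (hdiff0.const_mul L')).add (t3.add hdiff0)
    simp only [mul_zero, add_zero, zero_add] at this
    convert this using 2 with n
    ring
  -- z is a fixed point of every T i
  have hfix : ∀ i, T i z = z := by
    intro i
    set L' : ℝ := max (L i) 0 with hL'def
    have hbound : ∀ n, ‖T i z - z‖ ≤
        L' * ‖z - x n‖ + ‖T i (x n) - x n‖ + ‖x n - z‖ := by
      intro n
      have e1 : ‖T i z - T i (x n)‖ ≤ L' * ‖z - x n‖ := by
        have := hLip i 1 le_rfl z hzC (x n) (hxC n)
        simp only [Function.iterate_one] at this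
        exact this.trans (mul_le_mul_of_nonneg_right (le_max_left _ _) (norm_nonneg _))
      calc ‖T i z - z‖
          = ‖(T i z - T i (x n)) + (T i (x n) - x n) + (x n - z)‖ := by abel_nf
        _ ≤ ‖(T i z - T i (x n)) + (T i (x n) - x n)‖ + ‖x n - z‖ := norm_add_le _ _
        _ ≤ ‖T i z - T i (x n)‖ + ‖T i (x n) - x n‖ + ‖x n - z‖ := by
            linarith [norm_add_le (T i z - T i (x n)) (T i (x n) - x n)]
        _ ≤ L' * ‖z - x n‖ + ‖T i (x n) - x n‖ + ‖x n - z‖ := by linarith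
    have hrhs : Tendsto (fun n => L' * ‖z - x n‖ + ‖T i (x n) - x n‖ + ‖x n - z‖)
        atTop (𝓝 0) := by
      have t1 : Tendsto (fun n => ‖z - x n‖) atTop (𝓝 0) := by
        have := ((tendsto_const_nhds (x := z)).sub hz).norm
        simpa using this
      have t2 : Tendsto (fun n => ‖x n - z‖) atTop (𝓝 0) := by
        have := (hz.sub (tendsto_const_nhds (x := z))).norm
        simpa using this
      have := ((t1.const_mul L').add (hTx i)).add t2
      simpa using this
    have hle0 : ‖T i z - z‖ ≤ 0 := ge_of_tendsto hrhs (Eventually.of_forall hbound)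
    have : T i z - z = 0 := norm_le_zero_iff.1 hle0
    exact sub_eq_zero.1 this
  have hzF : z ∈ F := by
    rw [hF, Set.mem_iInter]
    intro i
    exact ⟨hzC, hfix i⟩
  refine ⟨z, hzF, ?_, hz⟩
  intro v hv
  have hvn : ∀ n, ‖x (n + 1) - x 0‖ ≤ ‖v - x 0‖ := fun n =>
    (hproj n).2 v (hFCS (n + 1) hv)
  have hlim : Tendsto (fun n => ‖x (n + 1) - x 0‖) atTop (𝓝 ‖z - x 0‖) :=
    (hx1z.sub (tendsto_const_nhds (x := x 0))).norm
  exact le_of_tendsto hlim (Eventually.of_forall hvn)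
end

section
/- Let H be a real Hilbert space and C a nonempty closed convex subset of H. Let T_1,…,T_N : C → C be closed quasi-nonexpansive mappings with F = ⋂_{i=1}^N F(T_i) ≠ ∅. Let {α_n} ⊂ [0,1] with α_n → 0. Let {x_n} be generated by: x_0 ∈ C, C_0 = C; y_n^i = α_n x_n + (1 − α_n) T_i x_n for i = 1,…,N; choose i_n ∈ {1,…,N} with ‖y_n^{i_n} − x_n‖ = max_{1≤i≤N} ‖y_n^i − x_n‖ and set ȳ_n = y_n^{i_n}; C_{n+1} = {v ∈ C_n : ‖v − ȳ_n‖ ≤ ‖v − x_n‖}; and x_{n+1} is the metric projection of x_0 onto C_{n+1}. Then {x_n} converges strongly to the metric projection of x_0 onto F. -/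
open Filter Topology

/-!
Quasi-nonexpansiveness keeps `F` inside every `C_n`, so `x_n`, the projection of `x_0` onto the
decreasing closed convex sets `C_n`, converges to the projection of `x_0` onto `⋂ C_n`
(Pythagoras makes `‖x_n - x_0‖²` increasing and bounded, and controls `‖x_m - x_n‖²` by its
increments). Since `x_{n+1} ∈ C_{n+1}`, `‖ȳ_n - x_n‖ ≤ 2‖x_{n+1} - x_n‖ → 0`; by the choice of
`i_n` this bounds `‖y_n^i - x_n‖ = (1 - α_n)‖T_i x_n - x_n‖` for every `i`, so `T_i x_n → z` and
closedness of `T_i` puts the limit `z` in `F`.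
-/

section MetricProjection

variable {H : Type*}

def IsMetricProjection [SeminormedAddCommGroup H] (S : Set H) (w z : H) : Prop :=
  z ∈ S ∧ ∀ v ∈ S, ‖z - w‖ ≤ ‖v - w‖

lemma IsMetricProjection.mono [SeminormedAddCommGroup H] {S K : Set H} {w z : H}
    (h : IsMetricProjection K w z) (hSK : S ⊆ K) (hz : z ∈ S) : IsMetricProjection S w z :=
  ⟨hz, fun v hv => h.2 v (hSK hv)⟩

variable [NormedAddCommGroup H] [InnerProductSpace ℝ H]

lemma IsMetricProjection.norm_sub_sq_add_le {K : Set H} {w u v : H} (hK : Convex ℝ K)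
    (hu : IsMetricProjection K w u) (hv : v ∈ K) :
    ‖v - u‖ ^ 2 + ‖u - w‖ ^ 2 ≤ ‖v - w‖ ^ 2 := by
  have : Nonempty K := ⟨⟨u, hu.1⟩⟩
  have hinf : ‖w - u‖ = ⨅ k : K, ‖w - k‖ :=
    le_antisymm (le_ciInf fun k => by simpa only [norm_sub_rev w] using hu.2 k k.2)
      (ciInf_le ⟨0, Set.forall_mem_range.2 fun _ => norm_nonneg _⟩ (⟨u, hu.1⟩ : K))
  have hinner := (norm_eq_iInf_iff_real_inner_le_zero hK hu.1).1 hinf v hv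
  rw [show v - w = (v - u) - (w - u) by abel, norm_sub_sq_real (v - u), real_inner_comm,
    norm_sub_rev w]
  linarith

lemma cauchySeq_of_isMetricProjection_antitone {K : ℕ → Set H} {w : H} {u : ℕ → H}
    (hanti : Antitone K) (hconv : ∀ n, Convex ℝ (K n)) (hne : (⋂ n, K n).Nonempty)
    (hu : ∀ n, IsMetricProjection (K n) w (u n)) : CauchySeq u := by
  obtain ⟨p, hp⟩ := hne
  have hd_mono : Monotone fun n => ‖u n - w‖ ^ 2 := fun n m hnm =>
    pow_le_pow_left₀ (norm_nonneg _) ((hu n).2 _ (hanti hnm (hu m).1)) 2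
  have hd_bdd : BddAbove (Set.range fun n => ‖u n - w‖ ^ 2) := by
    refine ⟨‖p - w‖ ^ 2, ?_⟩
    rintro _ ⟨n, rfl⟩
    exact pow_le_pow_left₀ (norm_nonneg _) ((hu n).2 p (Set.mem_iInter.1 hp n)) 2
  have hd_cauchy := (tendsto_atTop_ciSup hd_mono hd_bdd).cauchySeq
  refine Metric.cauchySeq_iff'.2 fun ε hε => ?_
  obtain ⟨N, hN⟩ := Metric.cauchySeq_iff'.1 hd_cauchy (ε ^ 2) (by positivity)
  refine ⟨N, fun n hn => ?_⟩
  have hpyth := (hu N).norm_sub_sq_add_le (hconv N) (hanti hn (hu n).1)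
  have hincr := hN n hn
  rw [Real.dist_eq, abs_of_nonneg (sub_nonneg.2 (hd_mono hn))] at hincr
  rw [dist_eq_norm]
  exact lt_of_pow_lt_pow_left₀ 2 hε.le (by linarith)

theorem tendsto_isMetricProjection_iInter [CompleteSpace H] {K : ℕ → Set H} {w : H}
    {u : ℕ → H} (hanti : Antitone K) (hclosed : ∀ n, IsClosed (K n))
    (hconv : ∀ n, Convex ℝ (K n)) (hne : (⋂ n, K n).Nonempty)
    (hu : ∀ n, IsMetricProjection (K n) w (u n)) :
    ∃ z, IsMetricProjection (⋂ n, K n) w z ∧ Tendsto u atTop (𝓝 z) := by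
  obtain ⟨z, hz⟩ := cauchySeq_tendsto_of_complete
    (cauchySeq_of_isMetricProjection_antitone hanti hconv hne hu)
  have hzK : ∀ n, z ∈ K n := fun n => (hclosed n).mem_of_tendsto hz <|
    (eventually_ge_atTop n).mono fun m hm => hanti hm (hu m).1
  refine ⟨z, ⟨Set.mem_iInter.2 hzK, fun v hv => ?_⟩, hz⟩
  exact le_of_tendsto (hz.sub_const w).norm <|
    Eventually.of_forall fun n => (hu n).2 v (Set.mem_iInter.1 hv n)

end MetricProjection

section Halfspaces

variable {H : Type*}

lemma convex_setOf_norm_sub_le_norm_sub [NormedAddCommGroup H] [InnerProductSpace ℝ H]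
    (a b : H) : Convex ℝ {v : H | ‖v - a‖ ≤ ‖v - b‖} := by
  have hset : {v : H | ‖v - a‖ ≤ ‖v - b‖}
      = innerSL ℝ (b - a) ⁻¹' Set.Iic ((‖b‖ ^ 2 - ‖a‖ ^ 2) / 2) := by
    ext v
    rw [Set.mem_ofPred_eq, Set.mem_preimage, Set.mem_Iic, innerSL_apply_apply,
      ← sq_le_sq₀ (norm_nonneg _) (norm_nonneg _), norm_sub_sq_real, norm_sub_sq_real,
      inner_sub_left, real_inner_comm v, real_inner_comm v]
    constructor <;> intro h <;> linarith
  rw [hset]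
  exact (convex_Iic _).linear_preimage (innerSL ℝ (b - a)).toLinearMap

variable {S : ℕ → Set H} {a b : ℕ → H}

lemma antitone_of_succ_eq_sep [SeminormedAddCommGroup H]
    (hS : ∀ n, S (n + 1) = {v ∈ S n | ‖v - a n‖ ≤ ‖v - b n‖}) : Antitone S :=
  antitone_nat_of_succ_le fun n => by rw [hS n]; exact Set.sep_subset _ _

lemma isClosed_of_succ_eq_sep [SeminormedAddCommGroup H]
    (hS : ∀ n, S (n + 1) = {v ∈ S n | ‖v - a n‖ ≤ ‖v - b n‖}) (h0 : IsClosed (S 0)) :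
    ∀ n, IsClosed (S n)
  | 0 => h0
  | n + 1 => by
    rw [hS n]
    exact (isClosed_of_succ_eq_sep hS h0 n).inter (isClosed_le (continuous_id.sub continuous_const).norm
      (continuous_id.sub continuous_const).norm)

lemma convex_of_succ_eq_sep [NormedAddCommGroup H] [InnerProductSpace ℝ H]
    (hS : ∀ n, S (n + 1) = {v ∈ S n | ‖v - a n‖ ≤ ‖v - b n‖}) (h0 : Convex ℝ (S 0)) :
    ∀ n, Convex ℝ (S n)
  | 0 => h0
  | n + 1 => by
    rw [hS n]
    exact (convex_of_succ_eq_sep hS h0 n).inter (convex_setOf_norm_sub_le_norm_sub _ _)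

lemma subset_of_succ_eq_sep_s3 [SeminormedAddCommGroup H] {F : Set H}
    (hS : ∀ n, S (n + 1) = {v ∈ S n | ‖v - a n‖ ≤ ‖v - b n‖}) (h0 : F ⊆ S 0)
    (hF : ∀ n, ∀ p ∈ F, ‖p - a n‖ ≤ ‖p - b n‖) : ∀ n, F ⊆ S n
  | 0 => h0
  | n + 1 => fun p hp => by
    rw [hS n]
    exact ⟨subset_of_succ_eq_sep_s3 hS h0 hF n hp, hF n p hp⟩

end Halfspaces

lemma norm_sub_le_two_mul_norm_sub {E : Type*} [SeminormedAddCommGroup E] {w y x : E}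
    (h : ‖w - y‖ ≤ ‖w - x‖) : ‖y - x‖ ≤ 2 * ‖w - x‖ := by
  linarith [norm_sub_le_norm_sub_add_norm_sub y w x, norm_sub_rev y w]

section ConvexCombination

variable {E : Type*} [SeminormedAddCommGroup E] [NormedSpace ℝ E]

lemma norm_sub_convexComb_le {p x t : E} {a : ℝ} (ha : a ∈ Set.Icc (0 : ℝ) 1)
    (ht : ‖p - t‖ ≤ ‖p - x‖) : ‖p - (a • x + (1 - a) • t)‖ ≤ ‖p - x‖ := by
  have hball := convex_closedBall p ‖p - x‖
    (mem_closedBall_iff_norm'.2 le_rfl) (mem_closedBall_iff_norm'.2 ht) ha.1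
    (sub_nonneg.2 ha.2) (add_sub_cancel _ _)
  exact mem_closedBall_iff_norm'.1 hball

lemma tendsto_sub_of_tendsto_convexComb_sub {ι : Type*} {l : Filter ι} {α : ι → ℝ}
    {x t : ι → E} (hα : Tendsto α l (𝓝 0))
    (h : Tendsto (fun n => α n • x n + (1 - α n) • t n - x n) l (𝓝 0)) :
    Tendsto (fun n => t n - x n) l (𝓝 0) := by
  have hinv : Tendsto (fun n => (1 - α n)⁻¹) l (𝓝 1) := by
    simpa using (tendsto_const_nhds.sub hα).inv₀ (by norm_num : (1 : ℝ) - 0 ≠ 0)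
  have hsmul : Tendsto (fun n => (1 - α n)⁻¹ • (α n • x n + (1 - α n) • t n - x n)) l (𝓝 0) := by
    simpa using hinv.smul h
  refine hsmul.congr' ?_
  filter_upwards [hα.eventually (gt_mem_nhds one_pos)] with n hn
  rw [show α n • x n + (1 - α n) • t n - x n = (1 - α n) • (t n - x n) by module,
    inv_smul_smul₀ (sub_ne_zero.2 hn.ne')]

end ConvexCombination

theorem stmt_3_general
    {H : Type*} [NormedAddCommGroup H] [InnerProductSpace ℝ H] [CompleteSpace H]
    (C : Set H) (hCcl : IsClosed C) (hCcv : Convex ℝ C)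
    (N : ℕ) (T : Fin N → H → H)
    (hQN : ∀ i, ∀ p ∈ C, T i p = p → ∀ x ∈ C, ‖p - T i x‖ ≤ ‖p - x‖)
    (hTclosed : ∀ i, ∀ (u : ℕ → H) (p q : H), (∀ n, u n ∈ C) → p ∈ C →
      Tendsto u atTop (𝓝 p) → Tendsto (fun n => T i (u n)) atTop (𝓝 q) → T i p = q)
    (F : Set H) (hF : F = ⋂ i, {x ∈ C | T i x = x}) (hFne : F.Nonempty)
    (α : ℕ → ℝ) (hα : ∀ n, α n ∈ Set.Icc (0 : ℝ) 1) (hαlim : Tendsto α atTop (𝓝 0))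
    (x : ℕ → H) (y : ℕ → Fin N → H) (i_ : ℕ → Fin N) (CS : ℕ → Set H)
    (hx0 : x 0 ∈ C) (hCS0 : CS 0 = C)
    (hy : ∀ n i, y n i = α n • x n + (1 - α n) • T i (x n))
    (hmax : ∀ n i, ‖y n i - x n‖ ≤ ‖y n (i_ n) - x n‖)
    (hCS : ∀ n, CS (n + 1) = {v ∈ CS n | ‖v - y n (i_ n)‖ ≤ ‖v - x n‖})
    (hproj : ∀ n, x (n + 1) ∈ CS (n + 1) ∧
      ∀ v ∈ CS (n + 1), ‖x (n + 1) - x 0‖ ≤ ‖v - x 0‖) :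
    ∃ z ∈ F, (∀ v ∈ F, ‖z - x 0‖ ≤ ‖v - x 0‖) ∧ Tendsto x atTop (𝓝 z) := by
  have hanti := antitone_of_succ_eq_sep hCS
  have hxC : ∀ n, x n ∈ C
    | 0 => hx0
    | n + 1 => hCS0 ▸ hanti (Nat.zero_le _) (hproj n).1
  have hFix : ∀ p ∈ F, p ∈ C ∧ ∀ i, T i p = p := fun p hp => by
    rw [hF, Set.mem_iInter] at hp
    exact ⟨(hp (i_ 0)).1, fun i => (hp i).2⟩
  have hFCS : ∀ n, F ⊆ CS n := subset_of_succ_eq_sep_s3 hCS (hCS0 ▸ fun p hp => (hFix p hp).1)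
    fun n p hp => by
      rw [hy]
      exact norm_sub_convexComb_le (hα n) (hQN _ p (hFix p hp).1 ((hFix p hp).2 _) _ (hxC n))
  obtain ⟨z, hz, hxz_succ⟩ := tendsto_isMetricProjection_iInter (u := fun n => x (n + 1))
    (fun m n h => hanti (Nat.succ_le_succ h))
    (fun n => isClosed_of_succ_eq_sep hCS (hCS0 ▸ hCcl) _)
    (fun n => convex_of_succ_eq_sep hCS (hCS0 ▸ hCcv) _)
    (hFne.mono fun p hp => Set.mem_iInter.2 fun n => hFCS _ hp) hproj
  have hxz : Tendsto x atTop (𝓝 z) := (tendsto_add_atTop_iff_nat 1).1 hxz_succ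
  have hzC : z ∈ C := hCS0 ▸ hanti (Nat.zero_le 1) (Set.mem_iInter.1 hz.1 0)
  have hzF : z ∈ F := by
    rw [hF]
    refine Set.mem_iInter.2 fun i => ⟨hzC, hTclosed i x z z hxC hzC hxz ?_⟩
    have hyi : Tendsto (fun n => y n i - x n) atTop (𝓝 0) :=
      squeeze_zero_norm (fun n => (hmax n i).trans
        (norm_sub_le_two_mul_norm_sub (hCS n ▸ (hproj n).1).2))
        (by simpa using ((hxz_succ.sub hxz).norm.const_mul 2))
    simp only [hy] at hyi
    simpa using (tendsto_sub_of_tendsto_convexComb_sub hαlim hyi).add hxz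
  exact ⟨z, hzF, (hz.mono (fun v hv => Set.mem_iInter.2 fun n => hFCS _ hv) hzF).2, hxz⟩

/-- Parallel hybrid method for a finite family of closed quasi-nonexpansive mappings
in a real Hilbert space (Theorem 3.6, Hilbert-space form). -/
theorem stmt_3
    {H : Type*} [NormedAddCommGroup H] [InnerProductSpace ℝ H] [CompleteSpace H]
    (C : Set H) (hCne : C.Nonempty) (hCcl : IsClosed C) (hCcv : Convex ℝ C)
    (N : ℕ) (hN : 0 < N) (T : Fin N → H → H) (hTmaps : ∀ i, Set.MapsTo (T i) C C)
    (hQN : ∀ i, ∀ p ∈ C, T i p = p → ∀ x ∈ C, ‖p - T i x‖ ≤ ‖p - x‖)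
    (hTclosed : ∀ i, ∀ (u : ℕ → H) (p q : H), (∀ n, u n ∈ C) → p ∈ C →
      Tendsto u atTop (𝓝 p) → Tendsto (fun n => T i (u n)) atTop (𝓝 q) → T i p = q)
    (F : Set H) (hF : F = ⋂ i, {x ∈ C | T i x = x}) (hFne : F.Nonempty)
    (α : ℕ → ℝ) (hα : ∀ n, α n ∈ Set.Icc (0 : ℝ) 1) (hαlim : Tendsto α atTop (𝓝 0))
    (x : ℕ → H) (y : ℕ → Fin N → H) (i_ : ℕ → Fin N) (CS : ℕ → Set H)
    (hx0 : x 0 ∈ C) (hCS0 : CS 0 = C)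
    (hy : ∀ n i, y n i = α n • x n + (1 - α n) • T i (x n))
    (hmax : ∀ n i, ‖y n i - x n‖ ≤ ‖y n (i_ n) - x n‖)
    (hCS : ∀ n, CS (n + 1) = {v ∈ CS n | ‖v - y n (i_ n)‖ ≤ ‖v - x n‖})
    (hproj : ∀ n, x (n + 1) ∈ CS (n + 1) ∧
      ∀ v ∈ CS (n + 1), ‖x (n + 1) - x 0‖ ≤ ‖v - x 0‖) :
    ∃ z ∈ F, (∀ v ∈ F, ‖z - x 0‖ ≤ ‖v - x 0‖) ∧ Tendsto x atTop (𝓝 z) :=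
  stmt_3_general C hCcl hCcv N T hQN hTclosed F hF hFne α hα hαlim x y i_ CS hx0 hCS0 hy hmax hCS
    hproj
end

section
/- Let E be a real Banach space, C ⊆ E, and let T_1,…,T_N : C → C be uniformly L-Lipschitz mappings (L > 0). For n ≥ 1 write n = (p_n − 1)N + j_n with j_n ∈ {1,…,N} (i.e. j_n = ((n−1) mod N) + 1 and p_n = ⌊(n−1)/N⌋ + 1). Let {x_n} ⊂ C be a sequence such that ‖x_n − T_{j_n}^{p_n} x_n‖ → 0 as n → ∞ and ‖x_n − x_{n+l}‖ → 0 as n → ∞ for every l ∈ {1,…,N}. Then for each l ∈ {1,…,N}, ‖x_n − T_l x_n‖ → 0 as n → ∞. -/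
open Filter Topology

/-!
Write `jₙ, pₙ` for the index and exponent attached to `n`. Passing from `n` to `n + N` keeps
`jₙ` and raises `pₙ` by one, so with `f = T_{jₙ}`, `u = xₙ`, `v = x_{n+N}` and `p = pₙ`,
`‖v - f v‖ ≤ ‖v - f^{p+1} v‖ + L ‖f^p v - v‖` and `‖f^p v - v‖ ≤ ‖u - f^p u‖ + (L + 1) ‖u - v‖`;
hence `‖xₙ - T_{jₙ} xₙ‖ → 0`. Every `l` occurs as `j_{n+k}` for some `k ∈ {1, …, N}`, and
`‖xₙ - T_l xₙ‖ ≤ ‖x_{n+k} - T_l x_{n+k}‖ + (L + 1) ‖xₙ - x_{n+k}‖` finishes the proof.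
-/

section UniformlyLipschitz

variable {E : Type*} [SeminormedAddCommGroup E]

def UniformlyLipschitzOn (L : ℝ) (f : E → E) (C : Set E) : Prop :=
  ∀ n, 1 ≤ n → ∀ x ∈ C, ∀ y ∈ C, ‖f^[n] x - f^[n] y‖ ≤ L * ‖x - y‖

variable {C : Set E} {L : ℝ}

theorem norm_sub_apply_le_of_lipschitzOn {g : E → E}
    (hg : ∀ x ∈ C, ∀ y ∈ C, ‖g x - g y‖ ≤ L * ‖x - y‖) {u v : E} (hu : u ∈ C) (hv : v ∈ C) :
    ‖u - g u‖ ≤ ‖v - g v‖ + (L + 1) * ‖u - v‖ := by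
  have hgv := hg v hv u hu
  calc ‖u - g u‖ ≤ ‖u - v‖ + ‖v - g v‖ + ‖g v - g u‖ := by
        have := norm_sub_le_norm_sub_add_norm_sub v (g v) (g u)
        have := norm_sub_le_norm_sub_add_norm_sub u v (g u)
        linarith
    _ ≤ ‖u - v‖ + ‖v - g v‖ + L * ‖u - v‖ := by rw [norm_sub_rev v u] at hgv; gcongr
    _ = ‖v - g v‖ + (L + 1) * ‖u - v‖ := by ring

namespace UniformlyLipschitzOn

variable {f : E → E}

theorem lipschitzOn (hf : UniformlyLipschitzOn L f C) :
    ∀ x ∈ C, ∀ y ∈ C, ‖f x - f y‖ ≤ L * ‖x - y‖ :=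
  hf 1 le_rfl

theorem norm_sub_apply_le (hf : UniformlyLipschitzOn L f C) (hmaps : Set.MapsTo f C C)
    (hL : 0 ≤ L) {u v : E} (hu : u ∈ C) (hv : v ∈ C) {p : ℕ} (hp : 1 ≤ p) :
    ‖v - f v‖ ≤ ‖v - f^[p + 1] v‖ + L * ‖u - f^[p] u‖ + L * (L + 1) * ‖u - v‖ := by
  have hstep : ‖f^[p + 1] v - f v‖ ≤ L * ‖f^[p] v - v‖ := by
    simpa only [Function.iterate_succ_apply'] using
      hf.lipschitzOn _ (hmaps.iterate p hv) v hv
  have hback : ‖f^[p] v - v‖ ≤ ‖u - f^[p] u‖ + (L + 1) * ‖u - v‖ := by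
    rw [norm_sub_rev, norm_sub_rev u v]
    exact norm_sub_apply_le_of_lipschitzOn (hf p hp) hv hu
  calc ‖v - f v‖ ≤ ‖v - f^[p + 1] v‖ + ‖f^[p + 1] v - f v‖ := norm_sub_le_norm_sub_add_norm_sub ..
    _ ≤ ‖v - f^[p + 1] v‖ + L * (‖u - f^[p] u‖ + (L + 1) * ‖u - v‖) := by
      gcongr; exact hstep.trans (by gcongr)
    _ = _ := by ring

end UniformlyLipschitzOn

variable {x : ℕ → E}

theorem tendsto_norm_sub_apply_of_periodic {S : ℕ → E → E} {p : ℕ → ℕ} {N : ℕ}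
    (hS : ∀ n, S (n + N) = S n) (hp : ∀ n, p (n + N) = p n + 1) (hp_pos : ∀ n, 1 ≤ p n)
    (hmaps : ∀ n, Set.MapsTo (S n) C C) (hLip : ∀ n, UniformlyLipschitzOn L (S n) C)
    (hL : 0 ≤ L) (hx : ∀ n, x n ∈ C)
    (hiter : Tendsto (fun n => ‖x n - (S n)^[p n] (x n)‖) atTop (𝓝 0))
    (hxN : Tendsto (fun n => ‖x n - x (n + N)‖) atTop (𝓝 0)) :
    Tendsto (fun n => ‖x n - S n (x n)‖) atTop (𝓝 0) := by
  rw [← tendsto_add_atTop_iff_nat N]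
  have hbound : ∀ n, ‖x (n + N) - S (n + N) (x (n + N))‖ ≤
      ‖x (n + N) - (S (n + N))^[p (n + N)] (x (n + N))‖ + L * ‖x n - (S n)^[p n] (x n)‖
        + L * (L + 1) * ‖x n - x (n + N)‖ := fun n => by
    rw [hS, hp]
    exact (hLip n).norm_sub_apply_le (hmaps n) hL (hx n) (hx (n + N)) (hp_pos n)
  have hlim := (((tendsto_add_atTop_iff_nat N).2 hiter).add (hiter.const_mul L)).add
    (hxN.const_mul (L * (L + 1)))
  simp only [mul_zero, add_zero] at hlim
  exact squeeze_zero (fun _ => norm_nonneg _) hbound hlim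

theorem tendsto_norm_sub_apply_of_recurrent {S : ℕ → E → E} {f : E → E}
    (hf : UniformlyLipschitzOn L f C) (hL : 0 ≤ L) (hx : ∀ n, x n ∈ C) {s : Finset ℕ}
    (hdisp : Tendsto (fun n => ‖x n - S n (x n)‖) atTop (𝓝 0))
    (hxs : ∀ k ∈ s, Tendsto (fun n => ‖x n - x (n + k)‖) atTop (𝓝 0))
    (hrec : ∀ n, ∃ k ∈ s, S (n + k) = f) :
    Tendsto (fun n => ‖x n - f (x n)‖) atTop (𝓝 0) := by
  set bound : ℕ → ℕ → ℝ := fun k n =>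
    ‖x (n + k) - S (n + k) (x (n + k))‖ + (L + 1) * ‖x n - x (n + k)‖
  have hbound : ∀ n, ‖x n - f (x n)‖ ≤ ∑ k ∈ s, bound k n := fun n => by
    obtain ⟨k, hk, hSk⟩ := hrec n
    calc ‖x n - f (x n)‖ ≤ bound k n := by
          simpa only [bound, hSk] using norm_sub_apply_le_of_lipschitzOn hf.lipschitzOn (hx n) (hx _)
      _ ≤ ∑ k ∈ s, bound k n := Finset.single_le_sum (f := fun k => bound k n) (fun _ _ => by positivity) hk
  have hlim : Tendsto (fun n => ∑ k ∈ s, bound k n) atTop (𝓝 0) := by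
    simpa using tendsto_finsetSum s fun k hk =>
      ((tendsto_add_atTop_iff_nat k).2 hdisp).add ((hxs k hk).const_mul (L + 1))
  exact squeeze_zero (fun _ => norm_nonneg _) hbound hlim

end UniformlyLipschitz

theorem exists_mem_Icc_add_mod_eq {N i : ℕ} (hi : i < N) (n : ℕ) :
    ∃ k ∈ Finset.Icc 1 N, (n + k) % N = i := by
  have hr := Nat.mod_lt (n + N - i) (by omega : 0 < N)
  have hdiv := Nat.div_add_mod (n + N - i) N
  refine ⟨N - (n + N - i) % N, Finset.mem_Icc.2 ⟨by omega, by omega⟩, ?_⟩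
  have : n + (N - (n + N - i) % N) = i + N * ((n + N - i) / N) := by omega
  rw [this, Nat.add_mul_mod_self_left, Nat.mod_eq_of_lt hi]

/-- Lemma 3.13: if `‖xₙ - T_{jₙ}^{pₙ} xₙ‖ → 0` and `‖xₙ - x_{n+l}‖ → 0` for each
`l ∈ {1,…,N}`, then `‖xₙ - T_l xₙ‖ → 0` for every `l`. Here, for `n ≥ 1`,
`jₙ = ((n-1) % N) + 1` and `pₙ = (n-1)/N + 1`. -/
theorem stmt_8
    {E : Type*} [NormedAddCommGroup E] [NormedSpace ℝ E]
    (C : Set E) (N : ℕ) (hN : 0 < N)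
    (T : Fin N → E → E) (hTmaps : ∀ i, Set.MapsTo (T i) C C)
    (L : ℝ) (hL : 0 < L)
    (hLip : ∀ i, ∀ n, 1 ≤ n → ∀ x ∈ C, ∀ y ∈ C,
      ‖(T i)^[n] x - (T i)^[n] y‖ ≤ L * ‖x - y‖)
    (x : ℕ → E) (hx : ∀ n, x n ∈ C)
    (h1 : Tendsto
      (fun n => ‖x n - (T ⟨(n - 1) % N, Nat.mod_lt _ hN⟩)^[(n - 1) / N + 1] (x n)‖)
      atTop (𝓝 0))
    (h2 : ∀ l, 1 ≤ l → l ≤ N → Tendsto (fun n => ‖x n - x (n + l)‖) atTop (𝓝 0)) :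
    ∀ i : Fin N, Tendsto (fun n => ‖x n - T i (x n)‖) atTop (𝓝 0) := by
  intro i
  -- `S n` is the map `T_{j_{n+1}}` attached to `x (n + 1)`.
  set S : ℕ → E → E := fun n => T ⟨n % N, Nat.mod_lt n hN⟩
  have h2' : ∀ k ∈ Finset.Icc 1 N, Tendsto (fun n => ‖x (n + 1) - x (n + k + 1)‖) atTop (𝓝 0) :=
    fun k hk => by
      obtain ⟨hk1, hkN⟩ := Finset.mem_Icc.1 hk
      simpa only [Nat.add_right_comm _ 1 k] using (tendsto_add_atTop_iff_nat 1).2 (h2 k hk1 hkN)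
  have hdisp : Tendsto (fun n => ‖x (n + 1) - S n (x (n + 1))‖) atTop (𝓝 0) :=
    tendsto_norm_sub_apply_of_periodic (p := fun n => n / N + 1)
      (fun n => by simp only [S, Nat.add_mod_right]) (fun n => by simp only [Nat.add_div_right _ hN])
      (fun _ => le_add_self) (fun _ => hTmaps _) (fun _ => hLip _) hL.le (fun _ => hx _)
      ((tendsto_add_atTop_iff_nat 1).2 h1) (h2' N (Finset.mem_Icc.2 ⟨hN, le_rfl⟩))
  rw [← tendsto_add_atTop_iff_nat 1]
  refine tendsto_norm_sub_apply_of_recurrent (hLip i) hL.le (fun _ => hx _) hdisp h2' fun n => ?_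
  obtain ⟨k, hk, hmod⟩ := exists_mem_Icc_add_mod_eq i.isLt n
  exact ⟨k, hk, by simp only [S, hmod]⟩
end

section
/- Let H be a real Hilbert space, let u, x, z ∈ H, let α ∈ [0,1], k ≥ 1 and ω > 0. If ‖u − z‖² ≤ k‖u − x‖² and ‖u‖ ≤ ω, then ‖u − (α x + (1 − α) z)‖² ≤ ‖u − x‖² + (k − 1)(ω + ‖x‖)². -/
theorem norm_smul_add_smul_sq_le {E : Type*} [SeminormedAddCommGroup E] [NormedSpace ℝ E]
    (a b : E) {α : ℝ} (hα₀ : 0 ≤ α) (hα₁ : α ≤ 1) :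
    ‖α • a + (1 - α) • b‖ ^ 2 ≤ α * ‖a‖ ^ 2 + (1 - α) * ‖b‖ ^ 2 :=
  (convexOn_univ_norm.pow (fun x _ => norm_nonneg x) 2).2 trivial trivial hα₀
    (sub_nonneg.2 hα₁) (add_sub_cancel α 1)

theorem stmt_11_general
    {H : Type*} [NormedAddCommGroup H] [InnerProductSpace ℝ H]
    (u x z : H) (α : ℝ) (hα : α ∈ Set.Icc (0 : ℝ) 1)
    (k : ℝ) (hk : 1 ≤ k) (ω : ℝ)
    (hz : ‖u - z‖ ^ 2 ≤ k * ‖u - x‖ ^ 2) (hu : ‖u‖ ≤ ω) :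
    ‖u - (α • x + (1 - α) • z)‖ ^ 2 ≤ ‖u - x‖ ^ 2 + (k - 1) * (ω + ‖x‖) ^ 2 := by
  obtain ⟨hα₀, hα₁⟩ := hα
  have hux : ‖u - x‖ ≤ ω + ‖x‖ := (norm_sub_le u x).trans (by gcongr)
  calc ‖u - (α • x + (1 - α) • z)‖ ^ 2
      = ‖α • (u - x) + (1 - α) • (u - z)‖ ^ 2 := by congr 2; module
    _ ≤ α * ‖u - x‖ ^ 2 + (1 - α) * ‖u - z‖ ^ 2 :=
      norm_smul_add_smul_sq_le _ _ hα₀ hα₁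
    _ ≤ α * ‖u - x‖ ^ 2 + (1 - α) * (k * ‖u - x‖ ^ 2) := by gcongr
    _ = ‖u - x‖ ^ 2 + (1 - α) * ((k - 1) * ‖u - x‖ ^ 2) := by ring
    _ ≤ ‖u - x‖ ^ 2 + (k - 1) * ‖u - x‖ ^ 2 :=
      add_le_add_right (mul_le_of_le_one_left
        (mul_nonneg (sub_nonneg.2 hk) (sq_nonneg _)) (sub_le_self 1 hα₀)) _
    _ ≤ ‖u - x‖ ^ 2 + (k - 1) * (ω + ‖x‖) ^ 2 := by
      gcongr

/-- The key estimate (Step 2 of Theorem 3.1 in Hilbert-space form): if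
`‖u - z‖² ≤ k ‖u - x‖²` and `‖u‖ ≤ ω`, then
`‖u - (α x + (1-α) z)‖² ≤ ‖u - x‖² + (k - 1)(ω + ‖x‖)²`. -/
theorem stmt_11
    {H : Type*} [NormedAddCommGroup H] [InnerProductSpace ℝ H]
    (u x z : H) (α : ℝ) (hα : α ∈ Set.Icc (0 : ℝ) 1)
    (k : ℝ) (hk : 1 ≤ k) (ω : ℝ) (hω : 0 < ω)
    (hz : ‖u - z‖ ^ 2 ≤ k * ‖u - x‖ ^ 2) (hu : ‖u‖ ≤ ω) :
    ‖u - (α • x + (1 - α) • z)‖ ^ 2 ≤ ‖u - x‖ ^ 2 + (k - 1) * (ω + ‖x‖) ^ 2 :=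
  stmt_11_general u x z α hα k hk ω hz hu
end
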